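/- The maximal estimate $\| \sup_{0 \leq t \leq 1} |e^{it\Delta} f(x)| \|_{L^2_x(\mathbb{T})} \lesssim \|f\|_{H^s(\mathbb{T})}$ fails for every $s < \frac{1}{4}$. Specifically, for $\kappa \in (0,\frac12)$ and $N \gg 1$, the modulated data $\tilde{f}(x) = e^{ix}\sum_{|k| \leq N/D} e^{iDkx}$ with $D = \lfloor N^{1-\kappa} \rfloor$ satisfies $\|\tilde f\|_{L^2(\mathbb{T})} \sim N^{\kappa/2}$ while $\sup_{0 \leq t \leq 1/D} |e^{it\Delta} \tilde f(x)| \gtrsim N^{\kappa}$ on a set of $x$ of measure comparable to $1$. -/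

import Mathlib

/-!
Galilean invariance: for frequencies `n = Dk + 1` the phase `nx - n²t` equals
`(x - t) + Dk(x - 2t) - D²k²t`. At times `t ∈ (2π/D²)ℤ` the last term lies in `2πℤ`, so
`|u(x, t)| = |∑_{|k| ≤ M} e^{iDkθ}|` with `M = ⌊N/D⌋`, where `θ` is `x - 2t` minus a point of
the grid `(2π/D)ℤ`.
These times are `2π/D²`-dense, so every `x` lying within `1/D` to the right of the grid admits a
`t ≤ 1/D` with `|DMθ| ≤ π/3` once `12M ≤ D`, and then every summand has real part `≥ 1/2`.
Hence the maximal function is `≥ (2M + 1)/2 ≈ N^κ` on a set of measure `1`, while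
`‖f̃‖_{L²} ≈ N^{κ/2}` and `‖f̃‖_{H^s} ≲ N^{κ/2 + s₊}`. For `κ = s₊ + 1/4 < 1/2` the maximal
estimate would give `N^κ ≲ N^{κ/2 + s₊}`, which fails for large `N` because `s₊ < 1/4`.
-/

open MeasureTheory Complex

noncomputable section
open Classical

def freeSol1 (c : ℤ → ℂ) (x t : ℝ) : ℂ :=
  ∑' n : ℤ, c n * Complex.exp (Complex.I * (((n:ℝ)*x - (n:ℝ)^2*t : ℝ) : ℂ))

def HsNorm1 (s : ℝ) (c : ℤ → ℂ) : ℝ :=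
  Real.sqrt (∑' n : ℤ, (Real.sqrt (1 + (n:ℝ)^2)) ^ (2*s) * ‖c n‖^2)

def circleL2 (g : ℝ → ℝ) : ℝ :=
  Real.sqrt (∫ x in Set.Icc (0:ℝ) (2*Real.pi), (g x)^2)

def ftildeCoef (N D : ℕ) : ℤ → ℂ :=
  fun n => if ∃ k : ℤ, |(k:ℝ)| ≤ (N:ℝ)/(D:ℝ) ∧ n = (D:ℤ)*k + 1 then 1 else 0

namespace TorusMaximal

open Finset Filter Set
open scoped Real

def modulatedAP (D M : ℕ) : Finset ℤ :=
  (Finset.Icc (-(M : ℤ)) M).image fun k => (D : ℤ) * k + 1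

lemma natCast_mul_add_one_injective {D : ℕ} (hD : D ≠ 0) :
    Function.Injective fun k : ℤ => (D : ℤ) * k + 1 :=
  (add_left_injective 1).comp (mul_right_injective₀ (Int.natCast_ne_zero.2 hD))

lemma card_modulatedAP {D : ℕ} (hD : D ≠ 0) (M : ℕ) : #(modulatedAP D M) = 2 * M + 1 := by
  rw [modulatedAP, card_image_of_injective _ (natCast_mul_add_one_injective hD), Int.card_Icc]
  omega

lemma abs_le_of_mem_modulatedAP {D M : ℕ} {n : ℤ} (hn : n ∈ modulatedAP D M) :
    |n| ≤ D * M + 1 := by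
  obtain ⟨k, hk, rfl⟩ := Finset.mem_image.1 hn
  calc |(D : ℤ) * k + 1| ≤ |(D : ℤ) * k| + 1 := by simpa using abs_add_le ((D : ℤ) * k) 1
    _ ≤ D * M + 1 := by
      rw [abs_mul, Nat.abs_cast]
      gcongr
      exact abs_le.2 (Finset.mem_Icc.1 hk)

lemma abs_intCast_le_div_iff (N D : ℕ) (k : ℤ) : |(k : ℝ)| ≤ N / D ↔ |k| ≤ (N / D : ℕ) := by
  rw [← Int.cast_abs, Int.abs_eq_natAbs, Int.cast_natCast, ← Nat.le_floor_iff (by positivity),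
    Nat.floor_div_eq_div]
  omega

lemma ftildeCoef_eq_indicator (N D : ℕ) :
    ftildeCoef N D = (modulatedAP D (N / D) : Set ℤ).indicator 1 := by
  ext n
  simp only [ftildeCoef, Set.indicator_apply, modulatedAP, coe_image, coe_Icc, Set.mem_image,
    Set.mem_Icc, ← abs_le, abs_intCast_le_div_iff, Pi.one_apply, eq_comm (a := n)]

lemma freeSol1_indicator_eq_sum (S : Finset ℤ) (x t : ℝ) :
    freeSol1 ((S : Set ℤ).indicator 1) x t =
      ∑ n ∈ S, exp (I * ((n * x - n ^ 2 * t : ℝ) : ℂ)) := by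
  rw [freeSol1, tsum_eq_sum (s := S) fun n hn => by simp [hn]]
  exact sum_congr rfl fun n hn => by simp [hn]

lemma norm_freeSol1_indicator_le (S : Finset ℤ) (x t : ℝ) :
    ‖freeSol1 ((S : Set ℤ).indicator 1) x t‖ ≤ #S := by
  rw [freeSol1_indicator_eq_sum]
  refine (norm_sum_le _ _).trans ?_
  simp only [norm_exp_I_mul_ofReal, sum_const, nsmul_eq_mul, mul_one, le_refl]

lemma continuous_norm_freeSol1_indicator (S : Finset ℤ) :
    Continuous ↿fun x t : ℝ => ‖freeSol1 ((S : Set ℤ).indicator 1) x t‖ := by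
  simp only [Function.HasUncurry.uncurry, freeSol1_indicator_eq_sum]
  fun_prop

lemma continuous_iSup_norm_freeSol1_indicator (S : Finset ℤ) (T : ℝ) :
    Continuous fun x => ⨆ t : Icc (0 : ℝ) T, ‖freeSol1 ((S : Set ℤ).indicator 1) x t‖ := by
  simpa only [sSup_image'] using
    isCompact_Icc.continuous_sSup (continuous_norm_freeSol1_indicator S) (K := Icc 0 T)

lemma norm_freeSol1_indicator_le_iSup (S : Finset ℤ) (x : ℝ) {t T : ℝ} (ht : t ∈ Icc 0 T) :
    ‖freeSol1 ((S : Set ℤ).indicator 1) x t‖ ≤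
      ⨆ t : Icc (0 : ℝ) T, ‖freeSol1 ((S : Set ℤ).indicator 1) x t‖ :=
  le_ciSup (f := fun t : Icc (0 : ℝ) T => ‖freeSol1 ((S : Set ℤ).indicator 1) x t‖)
    ⟨#S, by rintro _ ⟨t, rfl⟩; exact norm_freeSol1_indicator_le S x t⟩ ⟨t, ht⟩

lemma integral_cos_intCast_mul (j : ℤ) :
    ∫ x in (0 : ℝ)..2 * π, Real.cos (j * x) = if j = 0 then 2 * π else 0 := by
  split_ifs with hj
  · simp [hj]
  · rw [intervalIntegral.integral_comp_mul_left (fun x => Real.cos x) (Int.cast_ne_zero.2 hj),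
      integral_cos, show (j : ℝ) * (2 * π) = (2 * j : ℤ) * π by push_cast; ring,
      Real.sin_int_mul_pi]
    simp

lemma norm_sq_sum_exp (S : Finset ℤ) (x : ℝ) :
    ‖∑ n ∈ S, exp (I * ((n * x : ℝ) : ℂ))‖ ^ 2 = ∑ m ∈ S, ∑ n ∈ S, Real.cos ((m - n : ℤ) * x) := by
  have h := Complex.mul_conj' (∑ n ∈ S, exp (I * ((n * x : ℝ) : ℂ)))
  rw [map_sum, sum_mul_sum] at h
  apply_fun Complex.re at h
  rw [← Complex.ofReal_pow, Complex.ofReal_re] at h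
  rw [← h, Complex.re_sum]
  refine sum_congr rfl fun m _ => ?_
  rw [Complex.re_sum]
  refine sum_congr rfl fun n _ => ?_
  rw [← Complex.exp_conj, ← Complex.exp_add, map_mul, Complex.conj_I, Complex.conj_ofReal,
    ← Complex.exp_ofReal_mul_I_re]
  congr 2
  push_cast
  ring

lemma integral_norm_sq_freeSol1_indicator_zero (S : Finset ℤ) :
    ∫ x in Icc 0 (2 * π), ‖freeSol1 ((S : Set ℤ).indicator 1) x 0‖ ^ 2 = 2 * π * #S := by
  have hcos (j : ℤ) : IntervalIntegrable (fun x => Real.cos (j * x)) volume 0 (2 * π) :=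
    (by fun_prop : Continuous fun x => Real.cos (j * x)).intervalIntegrable _ _
  have hrow_cont (m : ℤ) : Continuous fun x => ∑ n ∈ S, Real.cos ((m - n : ℤ) * x) := by fun_prop
  have hrow (m : ℤ) (hm : m ∈ S) :
      ∫ x in (0 : ℝ)..2 * π, ∑ n ∈ S, Real.cos ((m - n : ℤ) * x) = 2 * π := by
    rw [intervalIntegral.integral_finsetSum fun n _ => hcos (m - n)]
    simp_rw [integral_cos_intCast_mul, sub_eq_zero, sum_ite_eq, if_pos hm]
  simp only [freeSol1_indicator_eq_sum, mul_zero, sub_zero, norm_sq_sum_exp]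
  rw [integral_Icc_eq_integral_Ioc, ← intervalIntegral.integral_of_le Real.two_pi_pos.le,
    intervalIntegral.integral_finsetSum fun m _ => (hrow_cont m).intervalIntegrable _ _]
  rw [sum_congr rfl hrow, sum_const, nsmul_eq_mul, mul_comm]

lemma circleL2_norm_freeSol1_indicator_zero (S : Finset ℤ) :
    circleL2 (fun x => ‖freeSol1 ((S : Set ℤ).indicator 1) x 0‖) = √(2 * π * #S) := by
  rw [circleL2, integral_norm_sq_freeSol1_indicator_zero]

lemma card_div_two_le_norm_sum_exp {α : Type*} (s : Finset α) (φ : α → ℝ)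
    (hφ : ∀ a ∈ s, |φ a| ≤ π / 3) : (#s : ℝ) / 2 ≤ ‖∑ a ∈ s, exp (φ a * I)‖ := by
  have hcos : ∀ a ∈ s, (1 / 2 : ℝ) ≤ Real.cos (φ a) := fun a ha => by
    rw [← Real.cos_abs, ← Real.cos_pi_div_three]
    exact Real.cos_le_cos_of_nonneg_of_le_pi (abs_nonneg _) (by linarith [Real.pi_pos]) (hφ a ha)
  calc (#s : ℝ) / 2 = ∑ a ∈ s, (1 / 2 : ℝ) := by rw [sum_const, nsmul_eq_mul]; ring
    _ ≤ ∑ a ∈ s, Real.cos (φ a) := sum_le_sum hcos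
    _ = (∑ a ∈ s, exp (φ a * I)).re := by simp only [Complex.re_sum, Complex.exp_ofReal_mul_I_re]
    _ ≤ _ := Complex.re_le_norm _

lemma norm_freeSol1_modulatedAP_eq {D : ℕ} (hD : D ≠ 0) (M : ℕ) {x t θ : ℝ} {l j : ℤ}
    (hx : D * (x - 2 * t - θ) = 2 * π * l) (ht : D ^ 2 * t = 2 * π * j) :
    ‖freeSol1 ((modulatedAP D M : Set ℤ).indicator 1) x t‖ =
      ‖∑ k ∈ Finset.Icc (-(M : ℤ)) M, exp ((D * k * θ : ℝ) * I)‖ := by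
  -- `(Dk+1)x - (Dk+1)²t = (x - t) + Dk(x - 2t) - D²k²t`, and the hypotheses make
  -- `Dk(x - 2t) - Dkθ` and `D²k²t` multiples of `2π`.
  have hphase (k : ℤ) :
      exp (I * ((((D * k + 1 : ℤ) : ℝ) * x - ((D * k + 1 : ℤ) : ℝ) ^ 2 * t : ℝ) : ℂ)) =
        exp (I * ((x - t : ℝ) : ℂ)) * exp ((D * k * θ : ℝ) * I) := by
    rw [← Complex.exp_add, Complex.exp_eq_exp_iff_exists_int]
    refine ⟨k * l - k ^ 2 * j, ?_⟩
    have hx' : (D : ℂ) * (x - 2 * t - θ) = 2 * π * l := by exact_mod_cast hx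
    have ht' : (D : ℂ) ^ 2 * t = 2 * π * j := by exact_mod_cast ht
    push_cast
    linear_combination I * (k * hx' - k ^ 2 * ht')
  rw [freeSol1_indicator_eq_sum, modulatedAP,
    sum_image fun a _ b _ h => natCast_mul_add_one_injective hD h]
  simp_rw [hphase, ← mul_sum, norm_mul, norm_exp_I_mul_ofReal, one_mul]

lemma exists_time_half_card_le_norm {D M : ℕ} (hD : 0 < D) (h12 : 12 * M ≤ D) {x : ℝ} {l : ℕ}
    (hx : x ∈ Ico (l * (2 * π / D)) (l * (2 * π / D) + 1 / D)) :
    ∃ t ∈ Icc 0 (1 / (D : ℝ)),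
      (2 * M + 1 : ℝ) / 2 ≤ ‖freeSol1 ((modulatedAP D M : Set ℤ).indicator 1) x t‖ := by
  have hD' : (0 : ℝ) < D := Nat.cast_pos.2 hD
  set y := x - l * (2 * π / D)
  have hy0 : 0 ≤ y := sub_nonneg.2 hx.1
  have hy1 : y < 1 / D := by linarith [hx.2]
  -- `t = jp/2` is the time in `(2π/D²)ℤ` for which `θ = y - 2t` lies in `[0, p)`.
  set p : ℝ := 4 * π / D ^ 2 with hp_def
  have hp : 0 < p := by positivity
  set j := ⌊y / p⌋
  set θ := Int.fract (y / p) * p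
  have hy : y = j * p + θ := by rw [← add_mul, Int.floor_add_fract, div_mul_cancel₀ _ hp.ne']
  have hθ0 : 0 ≤ θ := mul_nonneg (Int.fract_nonneg _) hp.le
  have hθp : θ < p := mul_lt_of_lt_one_left hp (Int.fract_lt_one _)
  refine ⟨j * p / 2, ⟨by positivity, by nlinarith⟩, ?_⟩
  have hcard : (#(Finset.Icc (-(M : ℤ)) M) : ℝ) = 2 * M + 1 := by
    rw [Int.card_Icc]
    norm_cast
    omega
  rw [← hcard, norm_freeSol1_modulatedAP_eq hD.ne' M (θ := θ) (l := l) (j := j)]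
  · refine card_div_two_le_norm_sum_exp _ _ fun k hk => ?_
    have hk : |(k : ℝ)| ≤ M := by exact_mod_cast abs_le.2 (Finset.mem_Icc.1 hk)
    have h12' : (12 * M : ℝ) ≤ D := by exact_mod_cast h12
    calc |(D * k * θ : ℝ)| = D * |(k : ℝ)| * θ := by
          rw [abs_mul, abs_mul, abs_of_pos hD', abs_of_nonneg hθ0]
      _ ≤ D * M * p := by gcongr
      _ = 4 * π * M / D := by rw [hp_def]; field_simp
      _ ≤ π / 3 := by
        rw [div_le_div_iff₀ hD' three_pos]
        nlinarith [Real.pi_pos]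
  · rw [show x - 2 * (j * p / 2) - θ = l * (2 * π / D) by linarith]
    push_cast
    field_simp
  · rw [hp_def]
    field_simp
    ring

def galileanSet (D : ℕ) : Set ℝ :=
  ⋃ l ∈ Finset.range D, Ico (l * (2 * π / D)) (l * (2 * π / D) + 1 / D)

lemma measurableSet_galileanSet (D : ℕ) : MeasurableSet (galileanSet D) :=
  Finset.measurableSet_biUnion _ fun _ _ => measurableSet_Ico

lemma Ico_subset_Ico_period (D : ℕ) (l : ℝ) :
    Ico (l * (2 * π / D)) (l * (2 * π / D) + 1 / D) ⊆
      Ico (l * (2 * π / D)) ((l + 1) * (2 * π / D)) := by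
  refine Ico_subset_Ico_right ?_
  rw [add_mul, one_mul]
  gcongr
  linarith [Real.pi_gt_three]

lemma galileanSet_subset {D : ℕ} (hD : 0 < D) : galileanSet D ⊆ Icc 0 (2 * π) := by
  refine iUnion₂_subset fun l hl => (Ico_subset_Ico_period D l).trans
    (Ico_subset_Icc_self.trans (Icc_subset_Icc (by positivity) ?_))
  have hl : (l + 1 : ℝ) ≤ D := by exact_mod_cast Finset.mem_range.1 hl
  calc ((l : ℝ) + 1) * (2 * π / D) ≤ D * (2 * π / D) := by gcongr
    _ = 2 * π := by field_simp

lemma volume_galileanSet {D : ℕ} (hD : 0 < D) : volume (galileanSet D) = 1 := by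
  have hdisj : ((range D : Finset ℕ) : Set ℕ).PairwiseDisjoint
      fun l : ℕ => Ico (l * (2 * π / D)) (l * (2 * π / D) + 1 / D) := by
    intro a _ b _ hab
    have h := Set.pairwise_disjoint_Ico_add_zsmul (0 : ℝ) (2 * π / D)
      (Nat.cast_injective.ne hab : (a : ℤ) ≠ b)
    simp only [Function.onFun, zero_add, zsmul_eq_mul] at h
    push_cast at h
    exact h.mono (Ico_subset_Ico_period D a) (Ico_subset_Ico_period D b)
  rw [galileanSet, measure_biUnion_finset hdisj fun _ _ => measurableSet_Ico]
  simp only [Real.volume_Ico, add_sub_cancel_left, sum_const, card_range, nsmul_eq_mul]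
  rw [← ENNReal.ofReal_natCast, ← ENNReal.ofReal_mul (by positivity),
    mul_one_div_cancel (by positivity), ENNReal.ofReal_one]

lemma mul_sqrt_le_circleL2 {g : ℝ → ℝ} (hg : Continuous g) {E : Set ℝ} (hE : MeasurableSet E)
    (hEsub : E ⊆ Icc 0 (2 * π)) {c : ℝ} (hc : 0 ≤ c) (hcg : ∀ x ∈ E, c ≤ g x) :
    c * √(volume.real E) ≤ circleL2 g := by
  have hint : IntegrableOn (fun x => g x ^ 2) (Icc 0 (2 * π)) := (hg.pow 2).integrableOn_Icc
  rw [circleL2, ← Real.sqrt_sq hc, ← Real.sqrt_mul (sq_nonneg c)]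
  apply Real.sqrt_le_sqrt
  calc c ^ 2 * volume.real E ≤ ∫ x in E, g x ^ 2 :=
        setIntegral_ge_of_const_le_real hE ((measure_mono hEsub).trans_lt measure_Icc_lt_top).ne
          (fun x hx => pow_le_pow_left₀ hc (hcg x hx) 2) (hint.mono_set hEsub)
    _ ≤ ∫ x in Icc 0 (2 * π), g x ^ 2 :=
        setIntegral_mono_set hint (ae_of_all _ fun x => sq_nonneg (g x)) hEsub.eventuallyLE

lemma half_card_le_iSup_norm_freeSol1 {D M : ℕ} (hD : 0 < D) (h12 : 12 * M ≤ D) {x : ℝ}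
    (hx : x ∈ galileanSet D) {T : ℝ} (hT : 1 / D ≤ T) :
    (2 * M + 1 : ℝ) / 2 ≤
      ⨆ t : Icc (0 : ℝ) T, ‖freeSol1 ((modulatedAP D M : Set ℤ).indicator 1) x t‖ := by
  obtain ⟨l, -, hxl⟩ := mem_iUnion₂.1 hx
  obtain ⟨t, ht, hlow⟩ := exists_time_half_card_le_norm hD h12 hxl
  exact hlow.trans (norm_freeSol1_indicator_le_iSup _ x ⟨ht.1, ht.2.trans hT⟩)

lemma half_card_le_circleL2_iSup {D M : ℕ} (hD : 0 < D) (h12 : 12 * M ≤ D) {T : ℝ}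
    (hT : 1 / D ≤ T) :
    (2 * M + 1 : ℝ) / 2 ≤ circleL2 fun x =>
      ⨆ t : Icc (0 : ℝ) T, ‖freeSol1 ((modulatedAP D M : Set ℤ).indicator 1) x t‖ := by
  have h := mul_sqrt_le_circleL2 (continuous_iSup_norm_freeSol1_indicator _ T)
    (measurableSet_galileanSet D) (galileanSet_subset hD) (by positivity)
    fun x hx => half_card_le_iSup_norm_freeSol1 hD h12 hx hT
  rwa [measureReal_def, volume_galileanSet hD, ENNReal.toReal_one, Real.sqrt_one, mul_one] at h

lemma circleL2_modulatedAP_bounds {D M : ℕ} (hD : D ≠ 0) {y : ℝ}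
    (hlow : y ≤ 2 * M + 1) (hup : 2 * M + 1 ≤ 5 * y) :
    1 / 2 * √y ≤ circleL2 (fun x => ‖freeSol1 ((modulatedAP D M : Set ℤ).indicator 1) x 0‖) ∧
      circleL2 (fun x => ‖freeSol1 ((modulatedAP D M : Set ℤ).indicator 1) x 0‖) ≤ 6 * √y := by
  rw [circleL2_norm_freeSol1_indicator_zero, card_modulatedAP hD]
  push_cast
  have hπ := Real.pi_gt_three
  have hπ' := Real.pi_lt_d2
  constructor
  · calc 1 / 2 * √y ≤ √y := by linarith [Real.sqrt_nonneg y]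
      _ ≤ _ := Real.sqrt_le_sqrt (by nlinarith)
  · calc √(2 * π * (2 * M + 1)) ≤ √(6 ^ 2 * y) := Real.sqrt_le_sqrt (by nlinarith)
      _ = 6 * √y := by rw [Real.sqrt_mul (by norm_num), Real.sqrt_sq (by norm_num)]

lemma natCast_div_floor_bounds (N : ℕ) {a : ℝ} (ha : 1 ≤ a) :
    N / a - 1 ≤ ((N / ⌊a⌋₊ : ℕ) : ℝ) ∧ ((N / ⌊a⌋₊ : ℕ) : ℝ) ≤ 2 * N / a := by
  have hD : a / 2 < ⌊a⌋₊ := Nat.div_two_lt_floor ha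
  have hDa : (⌊a⌋₊ : ℝ) ≤ a := Nat.floor_le (by linarith)
  have hD0 : (0 : ℝ) < ⌊a⌋₊ := by linarith
  constructor
  · rw [← Nat.floor_div_eq_div (K := ℝ)]
    refine le_trans ?_ (Nat.sub_one_lt_floor _).le
    gcongr
  · refine Nat.cast_div_le.trans ?_
    rw [div_le_div_iff₀ hD0 (by linarith)]
    nlinarith [(Nat.cast_nonneg N : (0 : ℝ) ≤ N)]

lemma eventually_modulatedAP_scales {κ : ℝ} (hκ0 : 0 < κ) (hκ : κ < 1 / 2) :
    ∀ᶠ N : ℕ in atTop, 0 < ⌊(N : ℝ) ^ (1 - κ)⌋₊ ∧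
      12 * (N / ⌊(N : ℝ) ^ (1 - κ)⌋₊) ≤ ⌊(N : ℝ) ^ (1 - κ)⌋₊ ∧
      (N : ℝ) ^ κ ≤ 2 * ((N / ⌊(N : ℝ) ^ (1 - κ)⌋₊ : ℕ) : ℝ) + 1 ∧
      2 * ((N / ⌊(N : ℝ) ^ (1 - κ)⌋₊ : ℕ) : ℝ) + 1 ≤ 5 * (N : ℝ) ^ κ := by
  have h48 : ∀ᶠ N : ℕ in atTop, 48 ≤ (N : ℝ) ^ (1 - 2 * κ) :=
    ((tendsto_rpow_atTop (by linarith)).comp tendsto_natCast_atTop_atTop).eventually_ge_atTop 48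
  filter_upwards [h48, eventually_ge_atTop 1] with N h48 hN
  have hN : (1 : ℝ) ≤ N := by exact_mod_cast hN
  have hN0 : (0 : ℝ) < N := by linarith
  set a := (N : ℝ) ^ (1 - κ) with ha_def
  have ha : 1 ≤ a := Real.one_le_rpow hN (by linarith)
  have hNκ : 1 ≤ (N : ℝ) ^ κ := Real.one_le_rpow hN hκ0.le
  have hNa : (N : ℝ) / a = N ^ κ := by
    rw [div_eq_iff (by positivity), ha_def, ← Real.rpow_add hN0]
    norm_num
  have ha48 : 48 * (N : ℝ) ^ κ ≤ a := by
    rw [ha_def, show 1 - κ = (1 - 2 * κ) + κ by ring, Real.rpow_add hN0]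
    gcongr
  obtain ⟨hM1, hM2⟩ := natCast_div_floor_bounds N ha
  rw [hNa] at hM1
  rw [mul_div_assoc, hNa] at hM2
  have hD : a / 2 < ⌊a⌋₊ := Nat.div_two_lt_floor ha
  refine ⟨Nat.floor_pos.2 ha, ?_, by linarith, by linarith⟩
  exact_mod_cast (show (12 * (N / ⌊a⌋₊ : ℕ) : ℝ) ≤ ⌊a⌋₊ by linarith)

lemma sqrt_one_add_sq_rpow_le {s σ : ℝ} (hs : s ≤ σ) (hσ : 0 ≤ σ) {R : ℝ} (hR : 1 ≤ R) {n : ℤ}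
    (hn : |(n : ℝ)| ≤ 2 * R) :
    √(1 + (n : ℝ) ^ 2) ^ (2 * s) ≤ 5 ^ σ * R ^ (2 * σ) := by
  have hn2 : (n : ℝ) ^ 2 ≤ 4 * R ^ 2 := by nlinarith [sq_abs (n : ℝ), abs_nonneg (n : ℝ)]
  calc √(1 + (n : ℝ) ^ 2) ^ (2 * s) ≤ √(1 + (n : ℝ) ^ 2) ^ (2 * σ) :=
        Real.rpow_le_rpow_of_exponent_le
          (Real.one_le_sqrt.2 (le_add_of_nonneg_right (sq_nonneg _))) (by linarith)
    _ = (1 + (n : ℝ) ^ 2) ^ σ := by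
        rw [Real.sqrt_eq_rpow, ← Real.rpow_mul (by positivity)]
        ring_nf
    _ ≤ (5 * R ^ 2) ^ σ := by gcongr; nlinarith
    _ = 5 ^ σ * R ^ (2 * σ) := by
        rw [Real.mul_rpow (by norm_num) (by positivity), ← Real.rpow_natCast,
          ← Real.rpow_mul (by linarith)]
        norm_num

lemma HsNorm1_indicator (s : ℝ) (S : Finset ℤ) :
    HsNorm1 s ((S : Set ℤ).indicator 1) = √(∑ n ∈ S, √(1 + (n : ℝ) ^ 2) ^ (2 * s)) := by
  rw [HsNorm1, tsum_eq_sum (s := S) fun n hn => by simp [hn]]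
  exact congrArg _ (sum_congr rfl fun n hn => by simp [hn])

lemma HsNorm1_modulatedAP_le {s σ : ℝ} (hs : s ≤ σ) (hσ : 0 ≤ σ) {N D : ℕ} (hD : D ≠ 0)
    (hN : 1 ≤ N) :
    HsNorm1 s ((modulatedAP D (N / D) : Set ℤ).indicator 1) ≤
      √((2 * (N / D : ℕ) + 1) * (5 ^ σ * (N : ℝ) ^ (2 * σ))) := by
  rw [HsNorm1_indicator]
  refine Real.sqrt_le_sqrt ?_
  have hbound : ∀ n ∈ modulatedAP D (N / D), |(n : ℝ)| ≤ 2 * N := fun n hn => by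
    have h := abs_le_of_mem_modulatedAP hn
    have hDN : ((D * (N / D) : ℕ) : ℤ) ≤ N := Nat.cast_le.2 (Nat.mul_div_le N D)
    rw [Nat.cast_mul] at hDN
    rw [← Int.cast_abs]
    exact_mod_cast (show |n| ≤ 2 * N by omega)
  calc ∑ n ∈ modulatedAP D (N / D), √(1 + (n : ℝ) ^ 2) ^ (2 * s)
      ≤ ∑ n ∈ modulatedAP D (N / D), 5 ^ σ * (N : ℝ) ^ (2 * σ) :=
        sum_le_sum fun n hn => sqrt_one_add_sq_rpow_le hs hσ (by exact_mod_cast hN) (hbound n hn)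
    _ = _ := by
        rw [sum_const, nsmul_eq_mul, card_modulatedAP hD]
        push_cast
        ring

theorem not_maximal_estimate_of_lt {s : ℝ} (hs : s < 1 / 4) :
    ¬ ∃ C > (0 : ℝ), ∀ c : ℤ → ℂ,
      circleL2 (fun x => ⨆ t : Icc (0 : ℝ) 1, ‖freeSol1 c x t.1‖) ≤ C * HsNorm1 s c := by
  rintro ⟨C, hC0, hC⟩
  set σ := max s 0
  set κ := σ + 1 / 4 with hκ
  have hσ : σ < 1 / 4 := max_lt hs (by norm_num)
  have hσ0 : 0 ≤ σ := le_max_right _ _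
  have hlarge : ∀ᶠ N : ℕ in atTop, 4 * C ^ 2 * 5 ^ σ < (N : ℝ) ^ (κ - 2 * σ) :=
    ((tendsto_rpow_atTop (by linarith)).comp tendsto_natCast_atTop_atTop).eventually_gt_atTop _
  obtain ⟨N, ⟨hD, h12, hlow, -⟩, hgrow, hN⟩ :=
    ((eventually_modulatedAP_scales (κ := κ) (by positivity) (by linarith)).and
      (hlarge.and (eventually_ge_atTop 1))).exists
  set D := ⌊(N : ℝ) ^ (1 - κ)⌋₊
  set M := N / D
  have hN0 : (0 : ℝ) < N := by exact_mod_cast hN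
  have hT : 1 / (D : ℝ) ≤ 1 := div_le_one_of_le₀ (by exact_mod_cast hD) (Nat.cast_nonneg D)
  have key : (2 * M + 1 : ℝ) / 2 ≤ C * √((2 * M + 1) * (5 ^ σ * (N : ℝ) ^ (2 * σ))) :=
    (half_card_le_circleL2_iSup hD h12 hT).trans ((hC _).trans
      (by gcongr; exact HsNorm1_modulatedAP_le (le_max_left s 0) hσ0 hD.ne' hN))
  have hsq : ((2 * M + 1 : ℝ) / 2) ^ 2 ≤ C ^ 2 * ((2 * M + 1) * (5 ^ σ * (N : ℝ) ^ (2 * σ))) := by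
    calc _ ≤ (C * √((2 * M + 1) * (5 ^ σ * (N : ℝ) ^ (2 * σ)))) ^ 2 :=
          pow_le_pow_left₀ (by positivity) key 2
      _ = _ := by rw [mul_pow, Real.sq_sqrt (by positivity)]
  have hbound : (N : ℝ) ^ κ ≤ 4 * C ^ 2 * 5 ^ σ * (N : ℝ) ^ (2 * σ) := by
    nlinarith [Real.rpow_pos_of_pos hN0 (2 * σ), Real.rpow_pos_of_pos (by norm_num : (0:ℝ) < 5) σ]
  rw [Real.rpow_sub hN0, lt_div_iff₀ (by positivity)] at hgrow
  linarith

end TorusMaximal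

/-- The maximal estimate on `𝕋` fails for every `s < 1/4`; quantitatively, the modulated
Dirichlet-type data `f̃` with `D = ⌊N^{1-κ}⌋` has `‖f̃‖_{L²} ∼ N^{κ/2}` while its maximal
function is `≳ N^κ` on a set of measure comparable to `1`. -/
theorem torus_maximal_fails_below_quarter :
    (∀ s : ℝ, s < 1/4 → ¬ ∃ C > (0:ℝ), ∀ c : ℤ → ℂ,
        circleL2 (fun x => ⨆ t : Set.Icc (0:ℝ) 1, ‖freeSol1 c x t.1‖) ≤ C * HsNorm1 s c)
    ∧ ∃ c₀ > (0:ℝ), ∃ c₁ > (0:ℝ), ∃ c₂ > (0:ℝ), ∀ κ : ℝ, 0 < κ → κ < 1/2 →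
        ∃ N₀ : ℕ, ∀ N : ℕ, N₀ ≤ N → ∀ D : ℕ, D = Nat.floor ((N:ℝ)^(1-κ)) →
          (c₁ * (N:ℝ)^(κ/2) ≤ circleL2 (fun x => ‖freeSol1 (ftildeCoef N D) x 0‖)
            ∧ circleL2 (fun x => ‖freeSol1 (ftildeCoef N D) x 0‖) ≤ c₂ * (N:ℝ)^(κ/2))
          ∧ ∃ E : Set ℝ, MeasurableSet E ∧ E ⊆ Set.Icc 0 (2*Real.pi) ∧
              ENNReal.ofReal c₀ ≤ volume E ∧
              ∀ x ∈ E, c₁ * (N:ℝ)^κ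
                ≤ ⨆ t : Set.Icc (0:ℝ) (1/(D:ℝ)), ‖freeSol1 (ftildeCoef N D) x t.1‖ := by
  open TorusMaximal in
  refine ⟨fun s hs => not_maximal_estimate_of_lt hs, 1, one_pos, 1 / 2, by norm_num, 6, by norm_num,
    fun κ hκ0 hκ => ?_⟩
  obtain ⟨N₀, hN₀⟩ := Filter.eventually_atTop.1 (eventually_modulatedAP_scales hκ0 hκ)
  refine ⟨N₀, fun N hN D hDN => ?_⟩
  obtain ⟨hD, h12, hlow, hup⟩ := hDN ▸ hN₀ N hN
  have hsqrt : (N : ℝ) ^ (κ / 2) = √((N : ℝ) ^ κ) := by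
    rw [Real.sqrt_eq_rpow, ← Real.rpow_mul (Nat.cast_nonneg N)]
    ring_nf
  rw [ftildeCoef_eq_indicator, hsqrt]
  refine ⟨circleL2_modulatedAP_bounds hD.ne' hlow hup, galileanSet D, measurableSet_galileanSet D,
    galileanSet_subset hD, by rw [ENNReal.ofReal_one, volume_galileanSet hD], fun x hx => ?_⟩
  exact le_trans (by linarith) (half_card_le_iSup_norm_freeSol1 hD h12 hx le_rfl)
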